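/- Let G be a connected graph on vertex set {1,...,n} with n ≥ 2, Φ = (F_1,...,F_n) with |V(F_i)| ≥ 2 for all i, and let D be a minimum dominating set of G[Φ]. If |D ∩ V(F_i)| = 2 and |D ∩ V(F_j)| = 2 with i ≠ j, then the distance in G[Φ] between any vertex of F_i and any vertex of F_j is at least 3. -/

import Mathlib

open scoped Classical

/-- A dominating set: every vertex is in `D` or adjacent to a vertex of `D`. -/
def isDominatingSet {V : Type*} (H : SimpleGraph V) (D : Finset V) : Prop :=
  ∀ v : V, v ∈ D ∨ ∃ u ∈ D, H.Adj u v

/-- A total dominating set: every vertex has a neighbor in `D`. -/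
def isTotalDominatingSet {V : Type*} (H : SimpleGraph V) (D : Finset V) : Prop :=
  ∀ v : V, ∃ u ∈ D, H.Adj u v

def isMinimalDominatingSet {V : Type*} (H : SimpleGraph V) (D : Finset V) : Prop :=
  isDominatingSet H D ∧ ∀ D' : Finset V, D' ⊂ D → ¬ isDominatingSet H D'

def isMinimalTotalDominatingSet {V : Type*} (H : SimpleGraph V) (D : Finset V) : Prop :=
  isTotalDominatingSet H D ∧ ∀ D' : Finset V, D' ⊂ D → ¬ isTotalDominatingSet H D'

noncomputable def domNum {V : Type*} (H : SimpleGraph V) : ℕ :=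
  sInf {k | ∃ D : Finset V, isDominatingSet H D ∧ D.card = k}

noncomputable def totalDomNum {V : Type*} (H : SimpleGraph V) : ℕ :=
  sInf {k | ∃ D : Finset V, isTotalDominatingSet H D ∧ D.card = k}

noncomputable def upperDomNum {V : Type*} (H : SimpleGraph V) : ℕ :=
  sSup {k | ∃ D : Finset V, isMinimalDominatingSet H D ∧ D.card = k}

noncomputable def upperTotalDomNum {V : Type*} (H : SimpleGraph V) : ℕ :=
  sSup {k | ∃ D : Finset V, isMinimalTotalDominatingSet H D ∧ D.card = k}

/-- Well (γ-)dominated: all minimal dominating sets have the same size. -/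
def WellDominated {V : Type*} (H : SimpleGraph V) : Prop :=
  ∀ D₁ D₂ : Finset V, isMinimalDominatingSet H D₁ → isMinimalDominatingSet H D₂ →
    D₁.card = D₂.card

/-- Well γ_t-dominated: all minimal total dominating sets have the same size. -/
def WellTotalDominated {V : Type*} (H : SimpleGraph V) : Prop :=
  ∀ D₁ D₂ : Finset V, isMinimalTotalDominatingSet H D₁ → isMinimalTotalDominatingSet H D₂ →
    D₁.card = D₂.card

/-- Restrained dominating set: dominating and every vertex outside `D` has a
neighbor outside `D`. -/
def isRestrainedDominatingSet {V : Type*} (H : SimpleGraph V) (D : Finset V) : Prop :=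
  isDominatingSet H D ∧ ∀ v ∉ D, ∃ u ∉ D, H.Adj u v

/-- Outer-connected dominating set: dominating and the subgraph induced by the
complement of `D` is connected. -/
def isOuterConnectedDominatingSet {V : Type*} (H : SimpleGraph V) (D : Finset V) : Prop :=
  isDominatingSet H D ∧ (H.induce ((↑D : Set V)ᶜ)).Connected

def isTotalRestrainedDominatingSet {V : Type*} (H : SimpleGraph V) (D : Finset V) : Prop :=
  isTotalDominatingSet H D ∧ ∀ v ∉ D, ∃ u ∉ D, H.Adj u v

def isTotalOuterConnectedDominatingSet {V : Type*} (H : SimpleGraph V) (D : Finset V) : Prop :=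
  isTotalDominatingSet H D ∧ (H.induce ((↑D : Set V)ᶜ)).Connected

noncomputable def restrainedDomNum {V : Type*} (H : SimpleGraph V) : ℕ :=
  sInf {k | ∃ D : Finset V, isRestrainedDominatingSet H D ∧ D.card = k}

noncomputable def ocDomNum {V : Type*} (H : SimpleGraph V) : ℕ :=
  sInf {k | ∃ D : Finset V, isOuterConnectedDominatingSet H D ∧ D.card = k}

noncomputable def totalRestrainedDomNum {V : Type*} (H : SimpleGraph V) : ℕ :=
  sInf {k | ∃ D : Finset V, isTotalRestrainedDominatingSet H D ∧ D.card = k}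

noncomputable def totalOcDomNum {V : Type*} (H : SimpleGraph V) : ℕ :=
  sInf {k | ∃ D : Finset V, isTotalOuterConnectedDominatingSet H D ∧ D.card = k}

/-- Paired dominating set: dominating and the induced subgraph on `D` has a
perfect matching. -/
def isPairedDominatingSet {V : Type*} (H : SimpleGraph V) (D : Finset V) : Prop :=
  isDominatingSet H D ∧
    ∃ M : SimpleGraph.Subgraph (H.induce (↑D : Set V)), M.IsPerfectMatching

noncomputable def pairedDomNum {V : Type*} (H : SimpleGraph V) : ℕ :=
  sInf {k | ∃ D : Finset V, isPairedDominatingSet H D ∧ D.card = k}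

def isIndependentSet {V : Type*} (H : SimpleGraph V) (D : Finset V) : Prop :=
  ∀ u ∈ D, ∀ v ∈ D, ¬ H.Adj u v

def isMaximalIndependentSet {V : Type*} (H : SimpleGraph V) (D : Finset V) : Prop :=
  isIndependentSet H D ∧ ∀ D' : Finset V, D ⊂ D' → ¬ isIndependentSet H D'

/-- The independent domination number `i(H)`. -/
noncomputable def indepDomNum {V : Type*} (H : SimpleGraph V) : ℕ :=
  sInf {k | ∃ D : Finset V, isMaximalIndependentSet H D ∧ D.card = k}

/-- The independence number `β₀(H)`. -/
noncomputable def indepNum {V : Type*} (H : SimpleGraph V) : ℕ :=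
  sSup {k | ∃ D : Finset V, isIndependentSet H D ∧ D.card = k}

/-- An efficient dominating set: every vertex is dominated by exactly one
member of `D`. -/
def isEfficientDominatingSet {V : Type*} (H : SimpleGraph V) (D : Finset V) : Prop :=
  ∀ v : V, ∃! u : V, u ∈ D ∧ (u = v ∨ H.Adj u v)

/-- The generalized lexicographic product `G[Φ]` of a graph `G` on `Fin n` and a
family `Φ = (F 0, …, F (n-1))` of pairwise disjoint graphs: the `F i` are induced
subgraphs, and vertices in distinct `F i`, `F j` are adjacent iff `i j ∈ E(G)`. -/
def GLP {n : ℕ} (G : SimpleGraph (Fin n)) {V : Fin n → Type*}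
    (F : ∀ i, SimpleGraph (V i)) : SimpleGraph (Σ i, V i) where
  Adj x y := (x.1 ≠ y.1 ∧ G.Adj x.1 y.1) ∨ ∃ h : x.1 = y.1, (F y.1).Adj (h ▸ x.2) y.2
  symm := by
    constructor
    rintro ⟨i, a⟩ ⟨j, b⟩ (⟨hne, hadj⟩ | ⟨h, hadj⟩)
    · exact Or.inl ⟨fun hh => hne hh.symm, hadj.symm⟩
    · dsimp only at h
      subst h
      exact Or.inr ⟨rfl, hadj.symm⟩
  loopless := by
    constructor
    rintro ⟨i, a⟩ (⟨hne, _⟩ | ⟨h, hadj⟩)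
    · exact hne rfl
    · exact (F i).loopless.irrefl a hadj

/-- The number of vertices of `D ∩ V(F i)`. -/
noncomputable def layerCount {n : ℕ} {V : Fin n → Type*} [∀ i, Fintype (V i)]
    (D : Finset (Σ i, V i)) (i : Fin n) : ℕ :=
  (D.filter (fun x => x.1 = i)).card

/-!
Two vertices in the same layer of `G[Φ]` have the same neighbours outside that layer, so when a
minimum dominating set `D` has two vertices `x, x'` in one layer, `D \ {x}` still dominates
everything outside it. Hence, if layers `i ≠ j` both carry two vertices of `D`: when `ij ∈ E(G)`,
a vertex of `D` in layer `i` dominates layer `j` and one vertex of layer `j` can be dropped; when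
`i` and `j` have a common neighbour `k` in `G`, one vertex of each of the two layers can be traded
for a single vertex of layer `k`. Both contradict minimality, and as `G[Φ]` is connected, distance
at most `2` between the layers would need one of these configurations.
-/

lemma domNum_le_card {W : Type*} {H : SimpleGraph W} {D : Finset W}
    (hD : isDominatingSet H D) : domNum H ≤ D.card :=
  Nat.sInf_le ⟨D, hD, rfl⟩

section layerCount

variable {n : ℕ} {V : Fin n → Type*} [∀ i, Fintype (V i)] {D : Finset (Σ i, V i)} {i : Fin n}

lemma exists_mem_of_layerCount_pos (h : 0 < layerCount D i) : ∃ x ∈ D, x.1 = i := by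
  obtain ⟨x, hx⟩ := Finset.card_pos.mp h
  exact ⟨x, (Finset.mem_filter.mp hx).1, (Finset.mem_filter.mp hx).2⟩

lemma exists_pair_of_two_le_layerCount (h : 2 ≤ layerCount D i) :
    ∃ x ∈ D, ∃ x' ∈ D, x ≠ x' ∧ x.1 = i ∧ x'.1 = i := by
  obtain ⟨x, hx, x', hx', hne⟩ := Finset.one_lt_card.mp h
  rw [Finset.mem_filter] at hx hx'
  exact ⟨x, hx.1, x', hx'.1, hne, hx.2, hx'.2⟩

end layerCount

namespace GLP

variable {n : ℕ} {G : SimpleGraph (Fin n)} {V : Fin n → Type*} {F : ∀ i, SimpleGraph (V i)}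

lemma adj_iff_of_fst_ne {x y : Σ i, V i} (h : x.1 ≠ y.1) : (GLP G F).Adj x y ↔ G.Adj x.1 y.1 :=
  ⟨fun hxy => hxy.elim And.right fun ⟨he, _⟩ => absurd he h, fun hG => Or.inl ⟨h, hG⟩⟩

lemma fst_eq_or_adj_of_adj {x y : Σ i, V i} (h : (GLP G F).Adj x y) :
    x.1 = y.1 ∨ G.Adj x.1 y.1 := by
  by_cases hxy : x.1 = y.1
  · exact Or.inl hxy
  · exact Or.inr ((adj_iff_of_fst_ne hxy).mp h)

lemma adj_of_adj (x y : Σ i, V i) (h : G.Adj x.1 y.1) : (GLP G F).Adj x y :=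
  (adj_iff_of_fst_ne h.ne).mpr h

lemma preconnected [Nontrivial (Fin n)] (hG : G.Preconnected) (hV : ∀ i, Nonempty (V i)) :
    (GLP G F).Preconnected := by
  let s : ∀ i, V i := fun i => Classical.choice (hV i)
  let emb : G →g GLP G F := ⟨fun i => ⟨i, s i⟩, fun h => adj_of_adj ⟨_, s _⟩ ⟨_, s _⟩ h⟩
  have to_section : ∀ x : Σ i, V i, (GLP G F).Reachable x ⟨x.1, s x.1⟩ := by
    rintro ⟨i, a⟩
    obtain ⟨k, hik⟩ := hG.exists_adj_of_nontrivial i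
    exact (adj_of_adj ⟨i, a⟩ ⟨k, s k⟩ hik).reachable.trans
      (adj_of_adj ⟨k, s k⟩ ⟨i, s i⟩ hik.symm).reachable
  intro x y
  exact (to_section x).trans (((hG x.1 y.1).map emb).trans (to_section y).symm)

lemma dominates_erase {D : Finset (Σ i, V i)} {x x' v : Σ i, V i} (hx' : x' ∈ D)
    (hne : x' ≠ x) (hfst : x'.1 = x.1) (hv : v.1 ≠ x.1)
    (hdom : v ∈ D ∨ ∃ u ∈ D, (GLP G F).Adj u v) :
    v ∈ D.erase x ∨ ∃ u ∈ D.erase x, (GLP G F).Adj u v := by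
  rcases hdom with hvD | ⟨u, huD, huv⟩
  · exact Or.inl (Finset.mem_erase.mpr ⟨fun h => hv (h ▸ rfl), hvD⟩)
  · by_cases hux : u = x
    · subst hux
      refine Or.inr ⟨x', Finset.mem_erase.mpr ⟨hne, hx'⟩, ?_⟩
      rw [adj_iff_of_fst_ne (hfst ▸ hv.symm), hfst]
      exact (adj_iff_of_fst_ne hv.symm).mp huv
    · exact Or.inr ⟨u, Finset.mem_erase.mpr ⟨hux, huD⟩, huv⟩

variable [∀ i, Fintype (V i)] {D : Finset (Σ i, V i)} {i j : Fin n}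

lemma not_adj_of_isMinimum (hD : isDominatingSet (GLP G F) D)
    (hDmin : D.card = domNum (GLP G F)) (hi : 0 < layerCount D i) (hj : 2 ≤ layerCount D j) :
    ¬ G.Adj i j := by
  intro hij
  obtain ⟨x, hxD, hxi⟩ := exists_mem_of_layerCount_pos hi
  obtain ⟨y, hyD, y', hy'D, hyy', hyj, hy'j⟩ := exists_pair_of_two_le_layerCount hj
  have hdom : isDominatingSet (GLP G F) (D.erase y) := by
    intro v
    by_cases hvj : v.1 = j
    · have hxy : x ≠ y := fun h => hij.ne (hxi ▸ hyj ▸ congrArg Sigma.fst h)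
      exact Or.inr ⟨x, Finset.mem_erase.mpr ⟨hxy, hxD⟩, adj_of_adj x v (hxi ▸ hvj ▸ hij)⟩
    · exact dominates_erase hy'D hyy'.symm (hy'j.trans hyj.symm) (hyj ▸ hvj) (hD v)
  have := domNum_le_card hdom
  have := Finset.card_erase_lt_of_mem hyD
  omega

lemma not_adj_adj_of_isMinimum (hD : isDominatingSet (GLP G F) D)
    (hDmin : D.card = domNum (GLP G F)) (hij : i ≠ j) (hi : 2 ≤ layerCount D i)
    (hj : 2 ≤ layerCount D j) (k : Fin n) (c : V k) : ¬ (G.Adj i k ∧ G.Adj k j) := by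
  rintro ⟨hik, hkj⟩
  obtain ⟨x, hxD, x', hx'D, hxx', hxi, hx'i⟩ := exists_pair_of_two_le_layerCount hi
  obtain ⟨y, hyD, y', hy'D, hyy', hyj, hy'j⟩ := exists_pair_of_two_le_layerCount hj
  have hy'x : y' ≠ x := fun h => hij (hxi ▸ hy'j ▸ congrArg Sigma.fst h.symm)
  have hyx : y ≠ x := fun h => hij (hxi ▸ hyj ▸ congrArg Sigma.fst h.symm)
  have hdom : isDominatingSet (GLP G F) (insert ⟨k, c⟩ ((D.erase x).erase y)) := by
    intro v
    by_cases hvij : v.1 = i ∨ v.1 = j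
    · refine Or.inr ⟨⟨k, c⟩, Finset.mem_insert_self _ _, adj_of_adj _ v ?_⟩
      rcases hvij with hvi | hvj
      · exact hvi ▸ hik.symm
      · exact hvj ▸ hkj
    · obtain ⟨hvi, hvj⟩ := not_or.mp hvij
      have hvx := dominates_erase hx'D hxx'.symm (hx'i.trans hxi.symm) (hxi ▸ hvi) (hD v)
      rcases dominates_erase (Finset.mem_erase.mpr ⟨hy'x, hy'D⟩) hyy'.symm
          (hy'j.trans hyj.symm) (hyj ▸ hvj) hvx with hv | ⟨u, hu, huv⟩
      · exact Or.inl (Finset.mem_insert_of_mem hv)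
      · exact Or.inr ⟨u, Finset.mem_insert_of_mem hu, huv⟩
  have := Finset.card_insert_le (⟨k, c⟩ : Σ i, V i) ((D.erase x).erase y)
  have := Finset.card_erase_lt_of_mem (Finset.mem_erase.mpr ⟨hyx, hyD⟩)
  have := Finset.card_erase_lt_of_mem hxD
  have := domNum_le_card hdom
  omega

end GLP

theorem stmt_8_general {n : ℕ} (G : SimpleGraph (Fin n)) (hG : G.Connected)
    (V : Fin n → Type) [∀ i, Fintype (V i)] (F : ∀ i, SimpleGraph (V i))
    (hV : ∀ i, 2 ≤ Fintype.card (V i)) (D : Finset (Σ i, V i))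
    (hD : isDominatingSet (GLP G F) D) (hDmin : D.card = domNum (GLP G F))
    (i j : Fin n) (hij : i ≠ j)
    (hi : layerCount D i = 2) (hj : layerCount D j = 2) :
    ∀ (a : V i) (b : V j), 3 ≤ (GLP G F).dist ⟨i, a⟩ ⟨j, b⟩ := by
  intro a b
  have : Nontrivial (Fin n) := ⟨⟨i, j, hij⟩⟩
  have hne : ∀ k, Nonempty (V k) := fun k => Fintype.card_pos_iff.mp (by have := hV k; omega)
  have hreach := GLP.preconnected (F := F) hG.preconnected hne ⟨i, a⟩ ⟨j, b⟩
  suffices 2 < (GLP G F).edist ⟨i, a⟩ ⟨j, b⟩ by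
    rw [← hreach.coe_dist_eq_edist] at this
    exact_mod_cast this
  have hGij := GLP.not_adj_of_isMinimum hD hDmin (hi ▸ two_pos) hj.ge
  refine SimpleGraph.two_lt_edist_iff.mpr ⟨fun h => hij (congrArg Sigma.fst h), ?_, ?_⟩
  · exact fun h => hGij ((GLP.adj_iff_of_fst_ne hij).mp h)
  · refine Set.eq_empty_of_forall_notMem fun w hw => ?_
    rw [SimpleGraph.mem_commonNeighbors] at hw
    rcases GLP.fst_eq_or_adj_of_adj hw.1 with hiw | hiw <;>
      rcases GLP.fst_eq_or_adj_of_adj hw.2 with hjw | hjw <;> dsimp only at hiw hjw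
    · exact hij (hiw.trans hjw.symm)
    · exact hGij (hiw ▸ hjw.symm)
    · exact hGij (hjw ▸ hiw)
    · exact GLP.not_adj_adj_of_isMinimum hD hDmin hij hi.ge hj.ge w.1 w.2 ⟨hiw, hjw.symm⟩

/-- If `D` is a minimum dominating set of `G[Φ]` with `|D ∩ V(F i)| = 2` and
`|D ∩ V(F j)| = 2` for `i ≠ j`, then vertices of `F i` and `F j` are at
distance at least 3 in `G[Φ]`. -/
theorem stmt_8 {n : ℕ} (hn : 2 ≤ n) (G : SimpleGraph (Fin n)) (hG : G.Connected)
    (V : Fin n → Type) [∀ i, Fintype (V i)] (F : ∀ i, SimpleGraph (V i))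
    (hV : ∀ i, 2 ≤ Fintype.card (V i)) (D : Finset (Σ i, V i))
    (hD : isDominatingSet (GLP G F) D) (hDmin : D.card = domNum (GLP G F))
    (i j : Fin n) (hij : i ≠ j)
    (hi : layerCount D i = 2) (hj : layerCount D j = 2) :
    ∀ (a : V i) (b : V j), 3 ≤ (GLP G F).dist ⟨i, a⟩ ⟨j, b⟩ :=
  stmt_8_general G hG V F hV D hD hDmin i j hij hi hj
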